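/- arXiv:2507.05049 — 3 statements merged into one kernel-verified Lean document; each statement's English description precedes it below -/
import Mathlib

section
/- The spectrum of the biharmonic Steklov–Neumann problem BSN3 on functions on the interval [0,1], i.e. the set of real numbers l for which there exists a nonzero smooth function f : [0,1] → ℝ satisfying f⁗ = 0 on [0,1], f'(0) = 0, f'(1) = 0, −f‴(0) + l·f(0) = 0, and f‴(1) + l·f(1) = 0, is exactly {0, 24}. -/
private lemma iterDeriv_zero_fun (n : ℕ) (x : ℝ) :
    iteratedDeriv n (fun _ : ℝ => (0:ℝ)) x = 0 := by
  rw [iteratedDeriv_eq_iterate, Function.iterate_fixed (deriv_const' (0:ℝ))]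

private lemma constOn (h : ℝ → ℝ) (hd : Differentiable ℝ h)
    (h0 : ∀ x ∈ Set.Icc (0:ℝ) 1, deriv h x = 0) :
    ∀ x ∈ Set.Icc (0:ℝ) 1, h x = h 0 := by
  apply constant_of_has_deriv_right_zero hd.continuous.continuousOn
  intro x hx
  have hx' : x ∈ Set.Icc (0:ℝ) 1 := ⟨hx.1, hx.2.le⟩
  have h1 := (hd x).hasDerivAt
  rw [h0 x hx'] at h1
  exact h1.hasDerivWithinAt

/-- The spectrum of the biharmonic Steklov–Neumann problem BSN3 on functions on `[0,1]`
is exactly `{0, 24}`. -/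
theorem stmt_2 :
    {l : ℝ | ∃ f : ℝ → ℝ, ContDiff ℝ (⊤ : ℕ∞) f ∧
      (∃ x ∈ Set.Icc (0:ℝ) 1, f x ≠ 0) ∧
      (∀ x ∈ Set.Icc (0:ℝ) 1, iteratedDeriv 4 f x = 0) ∧
      deriv f 0 = 0 ∧ deriv f 1 = 0 ∧
      -(iteratedDeriv 3 f 0) + l * f 0 = 0 ∧
      iteratedDeriv 3 f 1 + l * f 1 = 0} = {0, 24} := by
  ext l
  simp only [Set.mem_setOf_eq, Set.mem_insert_iff, Set.mem_singleton_iff]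
  constructor
  · rintro ⟨f, hf, ⟨x0, hx0, hfx0⟩, h4, hD0, hD1, hb0, hb1⟩
    have hdiff : ∀ n, Differentiable ℝ (iteratedDeriv n f) := by
      intro n
      rw [iteratedDeriv_eq_iterate]
      exact ((hf.of_le (by simp) : ContDiff ℝ (⊤:ℕ∞) f).iterate_deriv n).differentiable
        (by simp)
    set c0 := f 0 with hc0
    set c1 := deriv f 0 with hc1
    set c2 := iteratedDeriv 2 f 0 with hc2
    set c3 := iteratedDeriv 3 f 0 with hc3
    -- derivative relations as HasDerivAt
    have hder : ∀ (n : ℕ) (x : ℝ),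
        HasDerivAt (iteratedDeriv n f) (iteratedDeriv (n+1) f x) x := by
      intro n x
      have h1 := ((hdiff n) x).hasDerivAt
      rwa [show deriv (iteratedDeriv n f) = iteratedDeriv (n+1) f from
        (iteratedDeriv_succ).symm] at h1
    -- Step A : third derivative is constant on [0,1]
    have hA : ∀ x ∈ Set.Icc (0:ℝ) 1, iteratedDeriv 3 f x = c3 :=
      constOn _ (hdiff 3) (fun x hx => by
        rw [show deriv (iteratedDeriv 3 f) = iteratedDeriv 4 f from (iteratedDeriv_succ).symm]
        exact h4 x hx)
    -- Step B : second derivative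
    have hB : ∀ x ∈ Set.Icc (0:ℝ) 1, iteratedDeriv 2 f x = c2 + c3 * x := by
      have hg : ∀ x : ℝ, HasDerivAt (fun y => iteratedDeriv 2 f y - c3 * y)
          (iteratedDeriv 3 f x - c3) x := by
        intro x
        exact (hder 2 x).sub (by simpa using (hasDerivAt_id x).const_mul c3)
      have hcst := constOn (fun y => iteratedDeriv 2 f y - c3 * y)
        (fun x => (hg x).differentiableAt)
        (fun x hx => by rw [(hg x).deriv, hA x hx, sub_self])
      intro x hx
      have h1 := hcst x hx
      simp only [mul_zero, sub_zero] at h1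
      rw [← hc2] at h1
      linarith
    -- Step C : first derivative
    have hC : ∀ x ∈ Set.Icc (0:ℝ) 1, deriv f x = c1 + c2 * x + c3 * x^2 / 2 := by
      have hg : ∀ x : ℝ, HasDerivAt (fun y => deriv f y - c2 * y - c3 * y^2 / 2)
          (iteratedDeriv 2 f x - c2 - c3 * x) x := by
        intro x
        have h1 : HasDerivAt (deriv f) (iteratedDeriv 2 f x) x := by
          have := hder 1 x
          rwa [iteratedDeriv_one] at this
        have h2 : HasDerivAt (fun y : ℝ => c3 * y^2 / 2) (c3 * x) x := by
          have := ((hasDerivAt_pow 2 x).const_mul c3).div_const 2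
          refine this.congr_deriv ?_
          push_cast; ring
        exact (h1.sub (by simpa using (hasDerivAt_id x).const_mul c2)).sub h2
      have hcst := constOn (fun y => deriv f y - c2 * y - c3 * y^2 / 2)
        (fun x => (hg x).differentiableAt)
        (fun x hx => by rw [(hg x).deriv, hB x hx]; ring)
      intro x hx
      have h1 := hcst x hx
      rw [← hc1] at h1
      nlinarith [h1]
    -- Step D : the function itself
    have hD : ∀ x ∈ Set.Icc (0:ℝ) 1,
        f x = c0 + c1 * x + c2 * x^2 / 2 + c3 * x^3 / 6 := by
      have hg : ∀ x : ℝ, HasDerivAt (fun y => f y - c1 * y - c2 * y^2 / 2 - c3 * y^3 / 6)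
          (deriv f x - c1 - c2 * x - c3 * x^2 / 2) x := by
        intro x
        have h1 : HasDerivAt f (deriv f x) x :=
          ((hf.differentiable (by simp)) x).hasDerivAt
        have h2 : HasDerivAt (fun y : ℝ => c2 * y^2 / 2) (c2 * x) x := by
          have := ((hasDerivAt_pow 2 x).const_mul c2).div_const 2
          refine this.congr_deriv ?_; push_cast; ring
        have h3 : HasDerivAt (fun y : ℝ => c3 * y^3 / 6) (c3 * x^2 / 2) x := by
          have := ((hasDerivAt_pow 3 x).const_mul c3).div_const 6
          refine this.congr_deriv ?_; push_cast; ring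
        exact ((h1.sub (by simpa using (hasDerivAt_id x).const_mul c1)).sub h2).sub h3
      have hcst := constOn (fun y => f y - c1 * y - c2 * y^2 / 2 - c3 * y^3 / 6)
        (fun x => (hg x).differentiableAt)
        (fun x hx => by rw [(hg x).deriv, hC x hx]; ring)
      intro x hx
      have h1 := hcst x hx
      rw [← hc0] at h1
      nlinarith [h1]
    -- now the algebra
    have h01 : (1:ℝ) ∈ Set.Icc (0:ℝ) 1 := by norm_num
    have ec1 : c1 = 0 := hc1 ▸ hD0
    have e2 : c1 + c2 * 1 + c3 * 1^2 / 2 = 0 := by rw [← hC 1 h01]; exact hD1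
    have e2' : c2 = -c3 / 2 := by nlinarith [e2, ec1]
    have e31 : iteratedDeriv 3 f 1 = c3 := hA 1 h01
    have ef1 : f 1 = c0 + c1 * 1 + c2 * 1^2 / 2 + c3 * 1^3 / 6 := hD 1 h01
    have e1 : c3 = l * c0 := by linarith [hb0]
    have hb1' : c3 + l * (c0 + c1 * 1 + c2 * 1^2 / 2 + c3 * 1^3 / 6) = 0 := by
      rw [← ef1, ← e31]; exact hb1
    have key : l * c0 * (24 - l) = 0 := by
      linear_combination (l - 12) * e1 + (-6*l) * e2 + (-6*l) * ec1 + 12 * hb1'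
    rcases mul_eq_zero.mp key with h | h
    · rcases mul_eq_zero.mp h with h | h
      · exact Or.inl h
      · -- c0 = 0 : then f vanishes on [0,1], contradiction
        exfalso
        have hc3z : c3 = 0 := by rw [e1, h, mul_zero]
        have : f x0 = 0 := by
          rw [hD x0 hx0, h, hc3z, ec1, e2', hc3z]; ring
        exact hfx0 this
    · exact Or.inr (by linarith)
  · rintro (rfl | rfl)
    · -- l = 0 : constant function 1
      refine ⟨fun _ => 1, contDiff_const, ⟨0, by norm_num⟩, ?_, ?_, ?_, ?_, ?_⟩
      · intro x hx
        rw [show (4:ℕ) = 3+1 from rfl, iteratedDeriv_succ', deriv_const']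
        exact iterDeriv_zero_fun 3 x
      · simp
      · simp
      · rw [show (3:ℕ) = 2+1 from rfl, iteratedDeriv_succ', deriv_const']
        simp [iterDeriv_zero_fun 2 0]
      · rw [show (3:ℕ) = 2+1 from rfl, iteratedDeriv_succ', deriv_const']
        simp [iterDeriv_zero_fun 2 1]
    · -- l = 24 : f x = 4x^3 - 6x^2 + 1
      refine ⟨fun x => 4*x^3 - 6*x^2 + 1, by fun_prop, ⟨0, by norm_num⟩, ?_⟩
      have hd1 : deriv (fun x : ℝ => 4*x^3 - 6*x^2 + 1) = fun x => 12*x^2 - 12*x := by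
        funext x
        have h : HasDerivAt (fun x : ℝ => 4*x^3 - 6*x^2 + 1) (12*x^2 - 12*x) x := by
          have := (((hasDerivAt_pow 3 x).const_mul 4).sub
            ((hasDerivAt_pow 2 x).const_mul 6)).add_const 1
          refine this.congr_deriv ?_; push_cast; ring
        exact h.deriv
      have hd2 : deriv (fun x : ℝ => 12*x^2 - 12*x) = fun x => 24*x - 12 := by
        funext x
        have h : HasDerivAt (fun x : ℝ => 12*x^2 - 12*x) (24*x - 12) x := by
          have := ((hasDerivAt_pow 2 x).const_mul 12).sub ((hasDerivAt_id x).const_mul 12)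
          refine this.congr_deriv ?_; push_cast; ring
        exact h.deriv
      have hd3 : deriv (fun x : ℝ => 24*x - 12) = fun _ => 24 := by
        funext x
        have h : HasDerivAt (fun x : ℝ => 24*x - 12) 24 x := by
          have := ((hasDerivAt_id x).const_mul 24).sub_const 12
          refine this.congr_deriv ?_; ring
        exact h.deriv
      have e1 : iteratedDeriv 1 (fun x : ℝ => 4*x^3 - 6*x^2 + 1) = fun x => 12*x^2 - 12*x := by
        rw [iteratedDeriv_one, hd1]
      have e2 : iteratedDeriv 2 (fun x : ℝ => 4*x^3 - 6*x^2 + 1) = fun x => 24*x - 12 := by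
        have h : iteratedDeriv 2 (fun x : ℝ => 4*x^3 - 6*x^2 + 1)
            = deriv (iteratedDeriv 1 (fun x : ℝ => 4*x^3 - 6*x^2 + 1)) := iteratedDeriv_succ
        rw [h, e1, hd2]
      have e3 : iteratedDeriv 3 (fun x : ℝ => 4*x^3 - 6*x^2 + 1) = fun _ => 24 := by
        have h : iteratedDeriv 3 (fun x : ℝ => 4*x^3 - 6*x^2 + 1)
            = deriv (iteratedDeriv 2 (fun x : ℝ => 4*x^3 - 6*x^2 + 1)) := iteratedDeriv_succ
        rw [h, e2, hd3]
      have e4 : iteratedDeriv 4 (fun x : ℝ => 4*x^3 - 6*x^2 + 1) = fun _ => 0 := by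
        have h : iteratedDeriv 4 (fun x : ℝ => 4*x^3 - 6*x^2 + 1)
            = deriv (iteratedDeriv 3 (fun x : ℝ => 4*x^3 - 6*x^2 + 1)) := iteratedDeriv_succ
        rw [h, e3, deriv_const']
      refine ⟨fun x _ => by rw [e4], ?_, ?_, ?_, ?_⟩
      · rw [hd1]; norm_num
      · rw [hd1]; norm_num
      · rw [e3]; norm_num
      · rw [e3]; norm_num
end

section
/- The kernel of the biharmonic Steklov–Neumann problem BSN1 equals H_A^p(M): a smooth p-form ω satisfies Δ²ω = 0 on M, ν⌟ω = 0, ν⌟dω = 0, ν⌟Δω = 0, ν⌟Δdω = 0 on ∂M (i.e., is a BSN1 solution with eigenvalue ℓ = 0) if and only if dω = 0 and δω = 0 on M and ν⌟ω = 0 on ∂M. -/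
/-- The Hodge–de Rham Laplacian `Δ = dδ + δd`. -/
def hodgeLap {Ω : Type*} [AddCommGroup Ω] [Module ℝ Ω]
    (d codiff : Ω →ₗ[ℝ] Ω) : Ω →ₗ[ℝ] Ω :=
  d ∘ₗ codiff + codiff ∘ₗ d

/-- The kernel of BSN1 equals `H_A^p(M)`: a `p`-form `ω` satisfies `Δ²ω = 0` on `M`,
`ν⌟ω = 0`, `ν⌟dω = 0`, `ν⌟Δω = 0`, `ν⌟Δdω = 0` on `∂M` (a BSN1 solution with `ℓ = 0`)
iff `dω = 0`, `δω = 0` on `M` and `ν⌟ω = 0` on `∂M`. The geometric data is abstracted, with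
`hStokes` the basic integration by parts formula. -/
theorem stmt_9 {Ω ΩB : Type*}
    [AddCommGroup Ω] [Module ℝ Ω] [AddCommGroup ΩB] [Module ℝ ΩB]
    (d codiff : Ω →ₗ[ℝ] Ω)            -- exterior differential and codifferential
    (pull nuHook : Ω →ₗ[ℝ] ΩB)        -- ι* and ν⌟ along ∂M
    (intM : Ω →ₗ[ℝ] Ω →ₗ[ℝ] ℝ)        -- (α, β) ↦ ∫_M ⟨α, β⟩ dμ_g
    (intB : ΩB →ₗ[ℝ] ΩB →ₗ[ℝ] ℝ)      -- (α, β) ↦ ∫_{∂M} ⟨α, β⟩ dμ_g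
    (intM_symm : ∀ a b, intM a b = intM b a)
    (intM_nonneg : ∀ a, 0 ≤ intM a a)
    (intM_definite : ∀ a, intM a a = 0 → a = 0)
    (intB_symm : ∀ a b, intB a b = intB b a)
    (hStokes : ∀ α β, intM (d α) β = intM α (codiff β) - intB (pull α) (nuHook β))
    (hdd : ∀ α, d (d α) = 0) (hcc : ∀ α, codiff (codiff α) = 0)
    (ω : Ω) :
    (hodgeLap d codiff (hodgeLap d codiff ω) = 0 ∧
        nuHook ω = 0 ∧ nuHook (d ω) = 0 ∧
        nuHook (hodgeLap d codiff ω) = 0 ∧ nuHook (hodgeLap d codiff (d ω)) = 0)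
      ↔ (d ω = 0 ∧ codiff ω = 0 ∧ nuHook ω = 0) := by
  classical
  set Δ := hodgeLap d codiff with hΔ
  have hΔapp : ∀ α, Δ α = d (codiff α) + codiff (d α) := by
    intro α; simp [hΔ, hodgeLap]
  have key : ∀ α β, intM (Δ α) β =
      intM (codiff α) (codiff β) + intM (d β) (d α)
        - intB (pull (codiff α)) (nuHook β) + intB (pull β) (nuHook (d α)) := by
    intro α β
    have h1 := hStokes (codiff α) β
    have h2 := hStokes β (d α)
    have h2' : intM (codiff (d α)) β = intM (d β) (d α) + intB (pull β) (nuHook (d α)) := by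
      rw [intM_symm]; linarith
    rw [hΔapp, map_add, LinearMap.add_apply, h1, h2']; ring
  have hdΔ : ∀ α, d (Δ α) = Δ (d α) := by
    intro α; simp [hΔapp, map_add, hdd]
  constructor
  · rintro ⟨h2, hν, hνd, hνΔ, hνΔd⟩
    have e1 : intM (codiff (Δ ω)) (codiff ω) + intM (d ω) (Δ (d ω)) = 0 := by
      have := key (Δ ω) ω
      rw [h2, hν, hdΔ, hνΔd] at this
      simp at this
      linarith
    have hΔω : Δ ω = 0 := by
      apply intM_definite
      have := key ω (Δ ω)
      rw [hνΔ, hνd, hdΔ] at this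
      simp at this
      rw [this, intM_symm (codiff ω), intM_symm (Δ (d ω))]
      linarith
    have e2 : intM (codiff ω) (codiff ω) + intM (d ω) (d ω) = 0 := by
      have := key ω ω
      rw [hΔω, hν, hνd] at this
      simp at this
      linarith
    have hd0 : d ω = 0 := by
      apply intM_definite
      have h1 := intM_nonneg (codiff ω)
      have h2 := intM_nonneg (d ω)
      linarith
    have hc0 : codiff ω = 0 := by
      apply intM_definite
      have h1 := intM_nonneg (codiff ω)
      have h2 := intM_nonneg (d ω)
      linarith
    exact ⟨hd0, hc0, hν⟩
  · rintro ⟨hd, hc, hν⟩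
    have hΔω : Δ ω = 0 := by rw [hΔapp, hd, hc, map_zero, map_zero, add_zero]
    have hΔd : Δ (d ω) = 0 := by rw [hd, map_zero]
    refine ⟨by rw [hΔω, map_zero], hν, by rw [hd, map_zero],
      by rw [hΔω, map_zero], by rw [hΔd, map_zero]⟩
end

section
/- If ω is a BSN1 eigenform with eigenvalue ℓ ≠ 0, then ω is L²(∂M)-orthogonal to H_A^p(M): for every α ∈ H_A^p(M), ∫_{∂M} ⟨ι*ω, ι*α⟩ dμ = 0. -/
/-- A BSN1 eigenform `ω` with eigenvalue `ℓ ≠ 0` is `L²(∂M)`-orthogonal to `H_A^p(M)`: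
for every `α` with `dα = 0`, `δα = 0` on `M` and `ν⌟α = 0` on `∂M`,
`∫_{∂M} ⟨ι*ω, ι*α⟩ = 0`. The geometric data is abstracted, with `hStokes` the basic
integration by parts formula. -/
theorem stmt_11 {Ω ΩB : Type*}
    [AddCommGroup Ω] [Module ℝ Ω] [AddCommGroup ΩB] [Module ℝ ΩB]
    (d codiff : Ω →ₗ[ℝ] Ω)            -- exterior differential and codifferential
    (pull nuHook : Ω →ₗ[ℝ] ΩB)        -- ι* and ν⌟ along ∂M
    (intM : Ω →ₗ[ℝ] Ω →ₗ[ℝ] ℝ)        -- (α, β) ↦ ∫_M ⟨α, β⟩ dμ_g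
    (intB : ΩB →ₗ[ℝ] ΩB →ₗ[ℝ] ℝ)      -- (α, β) ↦ ∫_{∂M} ⟨α, β⟩ dμ_g
    (intM_symm : ∀ a b, intM a b = intM b a)
    (intB_symm : ∀ a b, intB a b = intB b a)
    (hStokes : ∀ α β, intM (d α) β = intM α (codiff β) - intB (pull α) (nuHook β))
    (hdd : ∀ α, d (d α) = 0) (hcc : ∀ α, codiff (codiff α) = 0)
    (ω : Ω) (ℓ : ℝ) (hℓ : ℓ ≠ 0)
    -- ω is a BSN1 eigenform with eigenvalue ℓ
    (h1 : hodgeLap d codiff (hodgeLap d codiff ω) = 0)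
    (h2 : nuHook ω = 0) (h3 : nuHook (d ω) = 0)
    (h4 : nuHook (hodgeLap d codiff ω) + ℓ • pull (codiff ω) = 0)
    (h5 : nuHook (hodgeLap d codiff (d ω)) + ℓ • pull ω = 0)
    -- α ∈ H_A^p(M)
    (α : Ω) (hα1 : d α = 0) (hα2 : codiff α = 0) (hα3 : nuHook α = 0) :
    intB (pull ω) (pull α) = 0 := by
  set L := hodgeLap d codiff with hLdef
  have hLx : ∀ x, L x = d (codiff x) + codiff (d x) := fun x => rfl
  -- d (L ω) = L (d ω)
  have key : d (L ω) = L (d ω) := by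
    rw [hLx, hLx, map_add, hdd, hdd, map_zero, add_zero, zero_add]
  -- term 1 vanishes
  have e1 : intM (d (codiff (L ω))) α = 0 := by
    rw [hStokes, hα2, hα3]; simp
  -- term 2 equals boundary term
  have e2 : intM (codiff (d (L ω))) α = intB (pull α) (nuHook (d (L ω))) := by
    have h := hStokes α (d (L ω))
    rw [hα1, map_zero, LinearMap.zero_apply] at h
    have := eq_of_sub_eq_zero h.symm
    rw [intM_symm]
    linarith [this]
  have h0 : intM (L (L ω)) α = 0 := by rw [h1, map_zero, LinearMap.zero_apply]
  have hsum : intM (L (L ω)) α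
      = intM (d (codiff (L ω))) α + intM (codiff (d (L ω))) α := by
    rw [hLx, map_add, LinearMap.add_apply]
  have hb : intB (pull α) (nuHook (d (L ω))) = 0 := by
    rw [← e2]; linarith [hsum, h0, e1]
  have h5' : nuHook (L (d ω)) = -(ℓ • pull ω) :=
    eq_neg_of_add_eq_zero_left h5
  rw [key, h5', map_neg, map_smul] at hb
  have : ℓ * intB (pull α) (pull ω) = 0 := by
    have := hb
    simp only [LinearMap.neg_apply, LinearMap.smul_apply, neg_eq_zero,
      smul_eq_mul] at this
    exact this
  rw [intB_symm]
  exact (mul_eq_zero.mp this).resolve_left hℓ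
end
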